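/- Let M⁺ and M⁻ be two gauges (positively homogeneous, subadditive, positive on nonzero vectors) on ℝⁿ with A⁻¹M⁻ ≤ M⁺ ≤ AM⁻ for some A > 0, and let F = (M⁺ + M⁻)/2. Suppose both M⁺ and M⁻ are β-uniformly convex in the sense that for all x, y with M^±(x), M^±(y) ≤ 1 and M^±(x−y) ≥ ε one has 1 − M^±((x+y)/2) ≥ C_± ε^β. Then F is β-uniformly convex: there exists C > 0 such that for all x, y with F(x), F(y) ≤ 1 and F(x−y) ≥ ε, one has 1 − F((x+y)/2) ≥ C ε^β. -/

import Mathlib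

/-!
Uniform convexity of `Mp` bounds `Mp (-v)` by a multiple of `Mp v`. Write `F = (Mp + Mm) / 2`.
If the average of `F x` and `F y` is `≳ ε` below `1`, convexity of `F` alone gives a gain linear in
`ε`, hence `≳ ε ^ β`. Otherwise `x` and `y` lie near the unit sphere of `F`; writing `x = a • u`,
`y = b • w` with `Mp u = Mp w = 1`, the unit vectors `u`, `w` are `Mp`-separated by `≳ ε`, and the
gain of `Mp` at their midpoint is inherited, with factor `min a b ≳ 1`, by `Mp` at the midpoint of
`x` and `y`, while `Mm` is merely convex.
-/

/-- `G` is a gauge on `ℝⁿ`: positively homogeneous, subadditive, positive on nonzero vectors. -/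
def IsGauge {n : ℕ} (G : EuclideanSpace ℝ (Fin n) → ℝ) : Prop :=
  (∀ (t : ℝ), 0 ≤ t → ∀ v, G (t • v) = t * G v) ∧
  (∀ u v, G (u + v) ≤ G u + G v) ∧
  (∀ v, v ≠ 0 → 0 < G v)

def IsUniformlyConvexWith {n : ℕ} (G : EuclideanSpace ℝ (Fin n) → ℝ) (C β : ℝ) : Prop :=
  ∀ ε ∈ Set.Icc (0 : ℝ) 2, ∀ x y, G x ≤ 1 → G y ≤ 1 → ε ≤ G (x - y) →
    C * ε ^ β ≤ 1 - G ((2 : ℝ)⁻¹ • (x + y))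

namespace IsGauge

variable {n : ℕ} {G : EuclideanSpace ℝ (Fin n) → ℝ}

theorem map_smul (hG : IsGauge G) {t : ℝ} (ht : 0 ≤ t) (v : EuclideanSpace ℝ (Fin n)) :
    G (t • v) = t * G v :=
  hG.1 t ht v

theorem map_add_le (hG : IsGauge G) (u v : EuclideanSpace ℝ (Fin n)) : G (u + v) ≤ G u + G v :=
  hG.2.1 u v

theorem map_zero (hG : IsGauge G) : G 0 = 0 := by
  simpa using hG.map_smul le_rfl 0

theorem nonneg (hG : IsGauge G) (v : EuclideanSpace ℝ (Fin n)) : 0 ≤ G v := by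
  rcases eq_or_ne v 0 with rfl | hv
  · exact hG.map_zero.ge
  · exact (hG.2.2 v hv).le

theorem sub_le_map_sub (hG : IsGauge G) (u v : EuclideanSpace ℝ (Fin n)) :
    G u - G v ≤ G (u - v) := by
  have := hG.map_add_le v (u - v)
  rw [add_sub_cancel] at this
  linarith

theorem map_midpoint_le (hG : IsGauge G) (x y : EuclideanSpace ℝ (Fin n)) :
    G ((2 : ℝ)⁻¹ • (x + y)) ≤ (G x + G y) / 2 := by
  rw [hG.map_smul (by norm_num)]
  linarith [hG.map_add_le x y]

theorem map_inv_smul_self (hG : IsGauge G) {v : EuclideanSpace ℝ (Fin n)} (hv : 0 < G v) :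
    G ((G v)⁻¹ • v) = 1 := by
  rw [hG.map_smul (inv_nonneg.2 hv.le), inv_mul_cancel₀ hv.ne']

theorem map_neg_le_of_map_eq_one (hG : IsGauge G) {C β : ℝ} (hC : 0 < C)
    (huc : IsUniformlyConvexWith G C β) {w : EuclideanSpace ℝ (Fin n)} (hw : G w = 1) :
    G (-w) ≤ max 2 (1 / (C * 2 ^ β)) := by
  set L := G (-w)
  rcases le_or_gt L 2 with hL | hL
  · exact hL.trans (le_max_left _ _)
  refine le_max_of_le_right ?_
  have hL0 : 0 < L := by linarith
  -- `(1 - 2/L) • w` and `w` are at distance exactly `2`, their midpoint has gauge `1 - 1/L`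
  have hx : G ((1 - 2 / L) • w) ≤ 1 := by
    rw [hG.map_smul (by rw [sub_nonneg, div_le_one hL0]; linarith), hw]
    linarith [div_pos two_pos hL0]
  have hsep : G ((1 - 2 / L) • w - w) = 2 := by
    rw [show (1 - 2 / L) • w - w = (2 / L) • -w by module, hG.map_smul (by positivity)]
    exact div_mul_cancel₀ 2 hL0.ne'
  have hmid : G ((2 : ℝ)⁻¹ • ((1 - 2 / L) • w + w)) = 1 - 1 / L := by
    rw [show (2 : ℝ)⁻¹ • ((1 - 2 / L) • w + w) = (1 - 1 / L) • w by module,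
      hG.map_smul (by rw [sub_nonneg, div_le_one hL0]; linarith), hw, mul_one]
  have := huc 2 ⟨zero_le_two, le_rfl⟩ _ _ hx hw.le hsep.ge
  rw [hmid, sub_sub_cancel] at this
  rw [le_div_iff₀ (by positivity)]
  rw [le_div_iff₀ hL0] at this
  linarith

theorem exists_map_neg_le (hG : IsGauge G) {C β : ℝ} (hC : 0 < C)
    (huc : IsUniformlyConvexWith G C β) :
    ∃ B, 1 ≤ B ∧ ∀ v, G (-v) ≤ B * G v := by
  refine ⟨max 2 (1 / (C * 2 ^ β)), le_max_of_le_left one_le_two, fun v => ?_⟩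
  rcases (hG.nonneg v).eq_or_lt with hv | hv
  · have hv0 : v = 0 := by_contra fun h => (hG.2.2 v h).ne' hv.symm
    simp [hv0, hG.map_zero]
  · have hneg : -v = G v • -((G v)⁻¹ • v) := by rw [smul_neg, smul_inv_smul₀ hv.ne']
    rw [hneg, hG.map_smul hv.le, mul_comm]
    exact mul_le_mul_of_nonneg_right
      (hG.map_neg_le_of_map_eq_one hC huc (hG.map_inv_smul_self hv)) hv.le

theorem exists_eq_smul (hG : IsGauge G) {x : EuclideanSpace ℝ (Fin n)} (hx : 0 < G x) :
    ∃ (a : ℝ) (u : EuclideanSpace ℝ (Fin n)), 0 < a ∧ G u = 1 ∧ x = a • u :=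
  ⟨G x, (G x)⁻¹ • x, hx, hG.map_inv_smul_self hx, (smul_inv_smul₀ hx.ne' x).symm⟩

theorem abs_sub_le_max_map_sub (hG : IsGauge G) (u w : EuclideanSpace ℝ (Fin n)) :
    |G u - G w| ≤ max (G (u - w)) (G (w - u)) :=
  abs_sub_le_iff.2 ⟨le_max_of_le_left (hG.sub_le_map_sub u w),
    le_max_of_le_right (hG.sub_le_map_sub w u)⟩

theorem map_midpoint_smul_le (hG : IsGauge G) {u w : EuclideanSpace ℝ (Fin n)} (hu : G u = 1)
    (hw : G w = 1) {a b c : ℝ} (ha : 0 ≤ a) (hb : 0 ≤ b)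
    (hc : c ≤ 1 - G ((2 : ℝ)⁻¹ • (u + w))) :
    G ((2 : ℝ)⁻¹ • (a • u + b • w)) ≤ (a + b) / 2 - min a b * c := by
  wlog hba : b ≤ a generalizing a b u w
  · have := this hw hu hb ha (by rwa [add_comm]) (by linarith)
    rwa [add_comm (b • w), add_comm b, min_comm] at this
  rw [min_eq_right hba,
    show (2 : ℝ)⁻¹ • (a • u + b • w) = b • ((2 : ℝ)⁻¹ • (u + w)) + ((a - b) / 2) • u by module]
  calc _ ≤ G (b • ((2 : ℝ)⁻¹ • (u + w))) + G (((a - b) / 2) • u) := hG.map_add_le _ _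
    _ = b * G ((2 : ℝ)⁻¹ • (u + w)) + (a - b) / 2 := by
      rw [hG.map_smul hb, hG.map_smul (v := u) (by linarith), hu, mul_one]
    _ ≤ b * (1 - c) + (a - b) / 2 := by gcongr; linarith
    _ = _ := by ring

theorem map_smul_sub_smul_le (hG : IsGauge G) {B : ℝ} (hB : 1 ≤ B)
    (hneg : ∀ v, G (-v) ≤ B * G v) {u w : EuclideanSpace ℝ (Fin n)} (hu : G u = 1)
    (hw : G w = 1) {a b : ℝ} (ha : 0 ≤ a) (hb : 0 ≤ b) :
    G (a • u - b • w) ≤ min a b * G (u - w) + B * |a - b| := by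
  rcases le_total b a with hba | hab
  · rw [min_eq_right hba, abs_of_nonneg (sub_nonneg.2 hba),
      show a • u - b • w = b • (u - w) + (a - b) • u by module]
    calc _ ≤ G (b • (u - w)) + G ((a - b) • u) := hG.map_add_le _ _
      _ = b * G (u - w) + (a - b) := by
        rw [hG.map_smul hb, hG.map_smul (by linarith), hu, mul_one]
      _ ≤ _ := by gcongr; nlinarith
  · rw [min_eq_left hab, abs_of_nonpos (sub_nonpos.2 hab),
      show a • u - b • w = a • (u - w) + (b - a) • -w by module]
    calc _ ≤ G (a • (u - w)) + G ((b - a) • -w) := hG.map_add_le _ _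
      _ = a * G (u - w) + (b - a) * G (-w) := by
        rw [hG.map_smul ha, hG.map_smul (by linarith)]
      _ ≤ _ := by
        have := hneg w
        rw [hw, mul_one] at this
        rw [neg_sub]
        nlinarith

end IsGauge

theorem IsUniformlyConvexWith.le_of_le_max {n : ℕ} {G : EuclideanSpace ℝ (Fin n) → ℝ} {C β : ℝ}
    (huc : IsUniformlyConvexWith G C β) {ε : ℝ} (hε : ε ∈ Set.Icc (0 : ℝ) 2)
    {u w : EuclideanSpace ℝ (Fin n)} (hu : G u ≤ 1) (hw : G w ≤ 1)
    (hsep : ε ≤ max (G (u - w)) (G (w - u))) :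
    C * ε ^ β ≤ 1 - G ((2 : ℝ)⁻¹ • (u + w)) := by
  rcases le_max_iff.1 hsep with h | h
  · exact huc ε hε u w hu hw h
  · rw [add_comm]
    exact huc ε hε w u hw hu h

theorem div_four_le_abs_sub_of_abs_mul_sub_le {a b p q δ : ℝ} (ha : 0 ≤ a) (ha2 : a ≤ 2)
    (hb : 0 ≤ b) (hb2 : b ≤ 2) (hx : 3 / 2 ≤ a * (1 + p))
    (hclose : |a * (1 + p) - b * (1 + q)| ≤ δ / 4) (hδ : δ ≤ |a - b|) :
    δ / 4 ≤ |p - q| := by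
  have key : a * b * (p - q) = a * (1 + p) * (b - a) + a * (a * (1 + p) - b * (1 + q)) := by
    ring
  have h1 : 3 / 2 * |a - b| ≤ |a * (1 + p) * (b - a)| := by
    rw [abs_mul, abs_sub_comm b, abs_of_nonneg (by linarith : 0 ≤ a * (1 + p))]
    exact mul_le_mul_of_nonneg_right hx (abs_nonneg _)
  have h2 : |a * (a * (1 + p) - b * (1 + q))| ≤ 2 * (δ / 4) := by
    rw [abs_mul, abs_of_nonneg ha]
    exact mul_le_mul ha2 hclose (abs_nonneg _) zero_le_two
  have h3 : |a * b * (p - q)| ≤ 4 * |p - q| := by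
    rw [abs_mul, abs_of_nonneg (mul_nonneg ha hb)]
    exact mul_le_mul_of_nonneg_right (by nlinarith) (abs_nonneg _)
  have h4 := abs_sub_abs_le_abs_add (a * (1 + p) * (b - a)) (a * (a * (1 + p) - b * (1 + q)))
  rw [← key] at h4
  linarith

theorem rpow_le_two_rpow_mul_half {ε β : ℝ} (hε : ε ∈ Set.Icc (0 : ℝ) 2) (hβ : 1 ≤ β) :
    ε ^ β ≤ 2 ^ β * (ε / 2) := by
  calc ε ^ β = (2 * (ε / 2)) ^ β := by rw [mul_div_cancel₀ ε two_ne_zero]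
    _ = 2 ^ β * (ε / 2) ^ β := Real.mul_rpow zero_le_two (by linarith [hε.1])
    _ ≤ 2 ^ β * (ε / 2) := by
      gcongr
      exact Real.rpow_le_self_of_le_one (by linarith [hε.1]) (by linarith [hε.2]) hβ

section

variable {n : ℕ} {P Q : EuclideanSpace ℝ (Fin n) → ℝ}

/-- Two points near the unit sphere of `(P + Q) / 2`, at `(P + Q) / 2`-distance `ε`, have
`P`-normalisations at `P`-distance `≳ ε`: either their `P`-values are close, and then the
normalisations carry the separation, or they differ, and then, the values of `P + Q` being
close, the values of `Q` at the normalisations differ. -/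
theorem le_max_map_sub_of_le_map_sub_smul (hP : IsGauge P) (hQ : IsGauge Q) {A B ε : ℝ}
    (hA : 1 ≤ A) (hQP : ∀ v, Q v ≤ A * P v) (hB : 1 ≤ B) (hneg : ∀ v, P (-v) ≤ B * P v)
    {u w : EuclideanSpace ℝ (Fin n)} (hu : P u = 1) (hw : P w = 1) {a b : ℝ} (ha : 0 ≤ a)
    (hb : 0 ≤ b) (hx : 3 / 2 ≤ P (a • u) + Q (a • u)) (hx2 : P (a • u) + Q (a • u) ≤ 2)
    (hy2 : P (b • w) + Q (b • w) ≤ 2)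
    (hclose : |P (a • u) + Q (a • u) - (P (b • w) + Q (b • w))| ≤ ε / (4 * B * (1 + A)))
    (hsep : 2 * ε ≤ P (a • u - b • w) + Q (a • u - b • w)) :
    ε / (4 * A * B * (1 + A)) ≤ max (P (u - w)) (P (w - u)) := by
  have hsx : P (a • u) + Q (a • u) = a * (1 + Q u) := by
    rw [hP.map_smul ha, hQ.map_smul ha, hu]; ring
  have hsy : P (b • w) + Q (b • w) = b * (1 + Q w) := by
    rw [hP.map_smul hb, hQ.map_smul hb, hw]; ring
  rw [hsx] at hx hx2 hclose
  rw [hsy] at hy2 hclose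
  have ha2 : a ≤ 2 := by nlinarith [hQ.nonneg u]
  have hb2 : b ≤ 2 := by nlinarith [hQ.nonneg w]
  have hsep' : ε ≤ (1 + A) * P (u - w) + (1 + A) * B * |a - b| / 2 := by
    have hmin : min a b * P (u - w) ≤ 2 * P (u - w) :=
      mul_le_mul_of_nonneg_right ((min_le_left a b).trans ha2) (hP.nonneg _)
    have := hP.map_smul_sub_smul_le hB hneg hu hw ha hb
    nlinarith [hQP (a • u - b • w), hP.nonneg (a • u - b • w)]
  have hABpos : 0 < B * (1 + A) := by positivity
  rw [div_le_iff₀ (by positivity)]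
  rcases le_or_gt (B * (1 + A) * |a - b|) ε with hab | hab
  · have hPuw : ε ≤ 2 * (1 + A) * P (u - w) := by nlinarith
    calc ε ≤ 2 * (1 + A) * P (u - w) := hPuw
      _ ≤ P (u - w) * (4 * A * B * (1 + A)) := by
        nlinarith [mul_nonneg (mul_nonneg (by nlinarith : 0 ≤ 4 * A * B - 2)
          (by linarith : 0 ≤ 1 + A)) (hP.nonneg (u - w))]
      _ ≤ _ := mul_le_mul_of_nonneg_right (le_max_left _ _) (by positivity)
  · have hδ : ε / (B * (1 + A)) ≤ |a - b| := by
      rw [div_le_iff₀ hABpos]; linarith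
    have hgap := div_four_le_abs_sub_of_abs_mul_sub_le ha ha2 hb hb2 hx
      (hclose.trans_eq (by field_simp)) hδ
    have hQmax := (hQ.abs_sub_le_max_map_sub u w).trans
      (max_le_max (hQP (u - w)) (hQP (w - u)))
    rw [← mul_max_of_nonneg _ _ (by linarith)] at hQmax
    rw [div_div, div_le_iff₀ (by positivity)] at hgap
    nlinarith

theorem map_add_map_midpoint_le (hP : IsGauge P) (hQ : IsGauge Q)
    (x y : EuclideanSpace ℝ (Fin n)) :
    P ((2 : ℝ)⁻¹ • (x + y)) + Q ((2 : ℝ)⁻¹ • (x + y)) ≤ (P x + Q x + (P y + Q y)) / 2 := by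
  linarith [hP.map_midpoint_le x y, hQ.map_midpoint_le x y]

theorem le_sub_map_add_map_midpoint_of_near (hP : IsGauge P) (hQ : IsGauge Q) {A B C β ε : ℝ}
    (hA : 1 ≤ A) (hQP : ∀ v, Q v ≤ A * P v) (hB : 1 ≤ B) (hneg : ∀ v, P (-v) ≤ B * P v)
    (hC : 0 ≤ C) (huc : IsUniformlyConvexWith P C β) (hε : ε ∈ Set.Icc (0 : ℝ) 2)
    {x y : EuclideanSpace ℝ (Fin n)} (hx : P x + Q x ≤ 2) (hy : P y + Q y ≤ 2)
    (hsep : 2 * ε ≤ P (x - y) + Q (x - y))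
    (hnear : 2 - (P x + Q x + (P y + Q y)) / 2 ≤ ε / (8 * B * (1 + A))) :
    3 / (2 * (1 + A)) * (C * (ε / (4 * A * B * (1 + A))) ^ β) ≤
      (P x + Q x + (P y + Q y)) / 2 - (P ((2 : ℝ)⁻¹ • (x + y)) + Q ((2 : ℝ)⁻¹ • (x + y))) := by
  obtain ⟨hε0, hε2⟩ := hε
  have hsmall : ε / (8 * B * (1 + A)) ≤ 1 / 8 := by
    rw [div_le_iff₀ (by positivity)]; nlinarith
  have hclose : |P x + Q x - (P y + Q y)| ≤ ε / (4 * B * (1 + A)) := by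
    have hdouble : ε / (4 * B * (1 + A)) = 2 * (ε / (8 * B * (1 + A))) := by field_simp; ring
    rw [abs_sub_le_iff]
    constructor <;> linarith
  have hx' : 3 / 2 ≤ P x + Q x := by linarith
  have hy' : 3 / 2 ≤ P y + Q y := by linarith
  have hlow : ∀ v, 3 / 2 ≤ P v + Q v → 3 / (2 * (1 + A)) ≤ P v := fun v hv => by
    rw [div_le_iff₀ (by positivity)]; linarith [hQP v]
  have hPx := hlow x hx'
  have hPy := hlow y hy'
  obtain ⟨a, u, ha, hu, rfl⟩ := hP.exists_eq_smul (lt_of_lt_of_le (by positivity) hPx)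
  obtain ⟨b, w, hb, hw, rfl⟩ := hP.exists_eq_smul (lt_of_lt_of_le (by positivity) hPy)
  have hκ : ε / (4 * A * B * (1 + A)) ∈ Set.Icc (0 : ℝ) 2 := by
    refine ⟨by positivity, (div_le_iff₀ (by positivity)).2 ?_⟩
    nlinarith [mul_le_mul hA hB zero_le_one (by linarith)]
  have hgain := huc.le_of_le_max hκ hu.le hw.le <|
    le_max_map_sub_of_le_map_sub_smul hP hQ hA hQP hB hneg hu hw ha.le hb.le hx' hx hy hclose hsep
  have hPm := hP.map_midpoint_smul_le hu hw ha.le hb.le hgain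
  rw [hP.map_smul ha.le, hu, mul_one] at hPx ⊢
  rw [hP.map_smul hb.le, hw, mul_one] at hPy ⊢
  have hmin := mul_le_mul_of_nonneg_right (le_min hPx hPy)
    (mul_nonneg hC (Real.rpow_nonneg hκ.1 β))
  linarith [hQ.map_midpoint_le (a • u) (b • w)]

end

theorem stmt5_general (n : ℕ) (Mp Mm : EuclideanSpace ℝ (Fin n) → ℝ)
    (hMp : IsGauge Mp) (hMm : IsGauge Mm)
    (A : ℝ) (hA : 0 < A) (hcomp : ∀ v, A⁻¹ * Mm v ≤ Mp v ∧ Mp v ≤ A * Mm v)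
    (β : ℝ) (hβ : 2 ≤ β)
    (Cp : ℝ) (hCp : 0 < Cp)
    (hucp : ∀ ε ∈ Set.Icc (0 : ℝ) 2, ∀ x y, Mp x ≤ 1 → Mp y ≤ 1 → ε ≤ Mp (x - y) →
      Cp * ε ^ β ≤ 1 - Mp ((2 : ℝ)⁻¹ • (x + y))) :
    ∃ C > 0, ∀ ε ∈ Set.Icc (0 : ℝ) 2, ∀ x y,
      (Mp x + Mm x) / 2 ≤ 1 → (Mp y + Mm y) / 2 ≤ 1 → ε ≤ (Mp (x - y) + Mm (x - y)) / 2 →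
      C * ε ^ β ≤ 1 - (Mp ((2 : ℝ)⁻¹ • (x + y)) + Mm ((2 : ℝ)⁻¹ • (x + y))) / 2 := by
  set A' := max A 1
  have hA' : 1 ≤ A' := le_max_right A 1
  have hQP : ∀ v, Mm v ≤ A' * Mp v := fun v => by
    have := (inv_mul_le_iff₀ hA).1 (hcomp v).1
    exact this.trans (mul_le_mul_of_nonneg_right (le_max_left A 1) (hMp.nonneg v))
  obtain ⟨B, hB, hneg⟩ := hMp.exists_map_neg_le hCp hucp
  set k := 4 * A' * B * (1 + A')
  refine ⟨min (1 / (2 ^ β * (8 * B * (1 + A')))) (3 * Cp / (2 * (1 + A') * k ^ β) / 2),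
    by positivity, fun ε hε x y hx hy hsep => ?_⟩
  have hmid := map_add_map_midpoint_le hMp hMm x y
  rcases le_or_gt (2 - (Mp x + Mm x + (Mp y + Mm y)) / 2) (ε / (8 * B * (1 + A')))
    with hnear | hfar
  · have hgain := le_sub_map_add_map_midpoint_of_near hMp hMm hA' hQP hB hneg hCp.le hucp hε
      (by linarith) (by linarith) (by linarith) hnear
    rw [Real.div_rpow hε.1 (by positivity)] at hgain
    calc _ ≤ 3 * Cp / (2 * (1 + A') * k ^ β) / 2 * ε ^ β :=
          mul_le_mul_of_nonneg_right (min_le_right _ _) (Real.rpow_nonneg hε.1 β)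
      _ = 3 / (2 * (1 + A')) * (Cp * (ε ^ β / k ^ β)) / 2 := by field_simp
      _ ≤ _ := by linarith
  · calc _ ≤ 1 / (2 ^ β * (8 * B * (1 + A'))) * (2 ^ β * (ε / 2)) :=
          mul_le_mul (min_le_left _ _) (rpow_le_two_rpow_mul_half hε (by linarith))
            (Real.rpow_nonneg hε.1 β) (by positivity)
      _ = ε / (8 * B * (1 + A')) / 2 := by field_simp
      _ ≤ _ := by linarith

theorem stmt5 (n : ℕ) (Mp Mm : EuclideanSpace ℝ (Fin n) → ℝ)
    (hMp : IsGauge Mp) (hMm : IsGauge Mm)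
    (A : ℝ) (hA : 0 < A) (hcomp : ∀ v, A⁻¹ * Mm v ≤ Mp v ∧ Mp v ≤ A * Mm v)
    (β : ℝ) (hβ : 2 ≤ β)
    (Cp : ℝ) (hCp : 0 < Cp)
    (hucp : ∀ ε ∈ Set.Icc (0 : ℝ) 2, ∀ x y, Mp x ≤ 1 → Mp y ≤ 1 → ε ≤ Mp (x - y) →
      Cp * ε ^ β ≤ 1 - Mp ((2 : ℝ)⁻¹ • (x + y)))
    (Cm : ℝ) (hCm : 0 < Cm)
    (hucm : ∀ ε ∈ Set.Icc (0 : ℝ) 2, ∀ x y, Mm x ≤ 1 → Mm y ≤ 1 → ε ≤ Mm (x - y) →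
      Cm * ε ^ β ≤ 1 - Mm ((2 : ℝ)⁻¹ • (x + y))) :
    ∃ C > 0, ∀ ε ∈ Set.Icc (0 : ℝ) 2, ∀ x y,
      (Mp x + Mm x) / 2 ≤ 1 → (Mp y + Mm y) / 2 ≤ 1 → ε ≤ (Mp (x - y) + Mm (x - y)) / 2 →
      C * ε ^ β ≤ 1 - (Mp ((2 : ℝ)⁻¹ • (x + y)) + Mm ((2 : ℝ)⁻¹ • (x + y))) / 2 :=
  stmt5_general n Mp Mm hMp hMm A hA hcomp β hβ Cp hCp hucp
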